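/- Let q > 1, with unbounded digits allowed. Denote by (α_i) and (β_i) the quasi-greedy and greedy expansions of 1 in base q. If (β_i) has a last nonzero element β_m, then (α_i) is periodic with smallest period β_1 ... β_{m−1} (β_m − 1), i.e., (α_i) = (β_1 ... β_{m−1} (β_m − 1))^∞ and no proper divisor of m is a period. Otherwise (β_i) = (α_i), and in this case the sequence is not periodic. -/

import Mathlib

/-- The next quasi-greedy digit with unbounded digits: the largest nonnegative integer `m`
with `s + m / q ^ (n+1) < x`, where `s` is the value of the previously chosen digits. -/
noncomputable def qgDigitU (q x s : ℝ) (n : ℕ) : ℕ :=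
  sSup {m : ℕ | s + (m : ℝ) / q ^ (n + 1) < x}

/-- Partial sums of the quasi-greedy expansion of `x` in base `q` with unbounded digits. -/
noncomputable def qgSumU (q x : ℝ) : ℕ → ℝ
  | 0 => 0
  | n + 1 => qgSumU q x n + (qgDigitU q x (qgSumU q x n) n : ℝ) / q ^ (n + 1)

/-- `quasiGreedyU q x n` is the `(n+1)`-st digit (indexing from 0) of the quasi-greedy
expansion of `x` in base `q` with unbounded digits: recursively, it is the largest
nonnegative integer `a_n` with `a_1/q + ⋯ + a_n/q^n < x`. -/
noncomputable def quasiGreedyU (q x : ℝ) (n : ℕ) : ℕ :=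
  qgDigitU q x (qgSumU q x n) n

/-- The next greedy digit with unbounded digits: the largest nonnegative integer `m`
with `s + m / q ^ (n+1) ≤ x`, where `s` is the value of the previously chosen digits. -/
noncomputable def gDigitU (q x s : ℝ) (n : ℕ) : ℕ :=
  sSup {m : ℕ | s + (m : ℝ) / q ^ (n + 1) ≤ x}

/-- Partial sums of the greedy expansion of `x` in base `q` with unbounded digits. -/
noncomputable def gSumU (q x : ℝ) : ℕ → ℝ
  | 0 => 0
  | n + 1 => gSumU q x n + (gDigitU q x (gSumU q x n) n : ℝ) / q ^ (n + 1)

/-- `greedyU q x n` is the `(n+1)`-st digit (indexing from 0) of the greedy expansion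
of `x` in base `q` with unbounded digits: recursively, it is the largest nonnegative
integer `b_n` with `b_1/q + ⋯ + b_n/q^n ≤ x`. -/
noncomputable def greedyU (q x : ℝ) (n : ℕ) : ℕ :=
  gDigitU q x (gSumU q x n) n

/-!
Write `X n = q ^ n (x - Σ_{i<n} α_i q^{-i-1})` and `Y n` for the scaled remainders of the
quasi-greedy and greedy expansions of `x`. They evolve by `X ↦ q X - (⌈q X⌉ - 1)` in `(0, 1]` and
`Y ↦ q Y - ⌊q Y⌋` in `[0, 1)`, and the two maps agree unless `q X` is an integer. Starting from
`x = 1`, the orbits therefore coincide as long as `Y` stays positive. If `Y` never vanishes, the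
expansions are equal; if `Y (m + 1) = 0` is the first zero, then `X (m + 1) = 1 = X 0`, so the
quasi-greedy expansion repeats with period `m + 1` and last digit `β_m - 1`. Finally, a period `p`
of `(α_i)` forces `X p = X 0 = 1`: the difference `X (n + p) - X n` is multiplied by `q` at each
step yet stays bounded. Since `Y p < 1` for `p ≥ 1`, no `p ≥ 1` with `X p = Y p` is a period.
-/

theorem Nat.sSup_setOf_cast_le_eq_floor {R : Type*} [Semiring R] [LinearOrder R]
    [FloorSemiring R] {t : R} (ht : 0 ≤ t) : sSup {m : ℕ | (m : R) ≤ t} = ⌊t⌋₊ := by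
  have : {m : ℕ | (m : R) ≤ t} = Set.Iic ⌊t⌋₊ := by
    ext m
    simp [Nat.le_floor_iff ht]
  rw [this, csSup_Iic]

theorem Nat.sSup_setOf_cast_lt_eq_ceil_sub_one {R : Type*} [Semiring R] [LinearOrder R]
    [FloorSemiring R] {t : R} (ht : 0 < t) : sSup {m : ℕ | (m : R) < t} = ⌈t⌉₊ - 1 := by
  have h1 : 1 ≤ ⌈t⌉₊ := Nat.one_le_ceil_iff.mpr ht
  have : {m : ℕ | (m : R) < t} = Set.Iic (⌈t⌉₊ - 1) := by
    ext m
    simp only [Set.mem_ofPred_eq, Set.mem_Iic, ← Nat.lt_ceil]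
    omega
  rw [this, csSup_Iic]

theorem eq_zero_of_forall_abs_pow_mul_le {q a C : ℝ} (hq : 1 < q)
    (h : ∀ n : ℕ, |q ^ n * a| ≤ C) : a = 0 := by
  by_contra ha
  have ha' : 0 < |a| := abs_pos.mpr ha
  obtain ⟨n, hn⟩ := pow_unbounded_of_one_lt (C / |a|) hq
  have hn' := h n
  rw [abs_mul, abs_of_pos (pow_pos (by linarith) n)] at hn'
  rw [div_lt_iff₀ ha'] at hn
  linarith

noncomputable def qgRemU (q x : ℝ) (n : ℕ) : ℝ := q ^ n * (x - qgSumU q x n)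

noncomputable def gRemU (q x : ℝ) (n : ℕ) : ℝ := q ^ n * (x - gSumU q x n)

section

variable {q x : ℝ}

@[simp] theorem qgRemU_zero : qgRemU q x 0 = x := by simp [qgRemU, qgSumU]

@[simp] theorem gRemU_zero : gRemU q x 0 = x := by simp [gRemU, gSumU]

theorem qgRemU_succ (hq : 0 < q) (n : ℕ) :
    qgRemU q x (n + 1) = q * qgRemU q x n - quasiGreedyU q x n := by
  have hqn : q ^ (n + 1) ≠ 0 := by positivity
  have hsum : qgSumU q x (n + 1) = qgSumU q x n + quasiGreedyU q x n / q ^ (n + 1) := rfl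
  rw [qgRemU, qgRemU, hsum]
  field_simp
  ring

theorem gRemU_succ (hq : 0 < q) (n : ℕ) :
    gRemU q x (n + 1) = q * gRemU q x n - greedyU q x n := by
  have hqn : q ^ (n + 1) ≠ 0 := by positivity
  have hsum : gSumU q x (n + 1) = gSumU q x n + greedyU q x n / q ^ (n + 1) := rfl
  rw [gRemU, gRemU, hsum]
  field_simp
  ring

theorem quasiGreedyU_eq_ceil_sub_one (hq : 0 < q) {n : ℕ} (hX : 0 < qgRemU q x n) :
    quasiGreedyU q x n = ⌈q * qgRemU q x n⌉₊ - 1 := by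
  rw [← Nat.sSup_setOf_cast_lt_eq_ceil_sub_one (by positivity), quasiGreedyU, qgDigitU]
  congr 1
  ext m
  rw [Set.mem_ofPred_eq, Set.mem_ofPred_eq, qgRemU, ← mul_assoc, ← pow_succ',
    ← lt_sub_iff_add_lt', div_lt_iff₀' (by positivity)]

theorem greedyU_eq_floor (hq : 0 < q) {n : ℕ} (hY : 0 ≤ gRemU q x n) :
    greedyU q x n = ⌊q * gRemU q x n⌋₊ := by
  rw [← Nat.sSup_setOf_cast_le_eq_floor (by positivity), greedyU, gDigitU]
  congr 1
  ext m
  rw [Set.mem_ofPred_eq, Set.mem_ofPred_eq, gRemU, ← mul_assoc, ← pow_succ',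
    ← le_sub_iff_add_le', div_le_iff₀' (by positivity)]

theorem quasiGreedyU_lt (hq : 0 < q) {n : ℕ} (hX : 0 < qgRemU q x n) :
    (quasiGreedyU q x n : ℝ) < q * qgRemU q x n := by
  have ht : 0 < q * qgRemU q x n := by positivity
  rw [quasiGreedyU_eq_ceil_sub_one hq hX, Nat.cast_sub (Nat.one_le_ceil_iff.mpr ht), Nat.cast_one]
  linarith [Nat.ceil_lt_add_one ht.le]

theorem le_quasiGreedyU_add_one (hq : 0 < q) {n : ℕ} (hX : 0 < qgRemU q x n) :
    q * qgRemU q x n ≤ quasiGreedyU q x n + 1 := by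
  have ht : 0 < q * qgRemU q x n := by positivity
  rw [quasiGreedyU_eq_ceil_sub_one hq hX, Nat.cast_sub (Nat.one_le_ceil_iff.mpr ht), Nat.cast_one]
  linarith [Nat.le_ceil (q * qgRemU q x n)]

theorem greedyU_le (hq : 0 < q) {n : ℕ} (hY : 0 ≤ gRemU q x n) :
    (greedyU q x n : ℝ) ≤ q * gRemU q x n := by
  rw [greedyU_eq_floor hq hY]
  exact Nat.floor_le (by positivity)

theorem lt_greedyU_add_one (hq : 0 < q) {n : ℕ} (hY : 0 ≤ gRemU q x n) :
    q * gRemU q x n < greedyU q x n + 1 := by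
  rw [greedyU_eq_floor hq hY]
  exact Nat.lt_floor_add_one _

theorem qgRemU_pos (hq : 0 < q) (hx : 0 < x) (n : ℕ) : 0 < qgRemU q x n := by
  induction n with
  | zero => simpa
  | succ n ih => linarith [qgRemU_succ (x := x) hq n, quasiGreedyU_lt hq ih]

theorem qgRemU_le_one (hq : 0 < q) (hx : 0 < x) (hx1 : x ≤ 1) (n : ℕ) : qgRemU q x n ≤ 1 := by
  cases n with
  | zero => simpa
  | succ n =>
    linarith [qgRemU_succ (x := x) hq n, le_quasiGreedyU_add_one hq (qgRemU_pos hq hx n)]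

theorem gRemU_nonneg (hq : 0 < q) (hx : 0 ≤ x) (n : ℕ) : 0 ≤ gRemU q x n := by
  induction n with
  | zero => simpa
  | succ n ih => linarith [gRemU_succ (x := x) hq n, greedyU_le hq ih]

theorem gRemU_succ_lt_one (hq : 0 < q) (hx : 0 ≤ x) (n : ℕ) : gRemU q x (n + 1) < 1 := by
  linarith [gRemU_succ (x := x) hq n, lt_greedyU_add_one hq (gRemU_nonneg hq hx n)]

theorem greedyU_eq_zero_of_gRemU_eq_zero (hq : 0 < q) {n : ℕ} (h : gRemU q x n = 0) :
    greedyU q x n = 0 := by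
  simp [greedyU_eq_floor hq h.ge, h]

theorem gRemU_eq_zero_of_le (hq : 0 < q) {n k : ℕ} (h : gRemU q x n = 0) (hnk : n ≤ k) :
    gRemU q x k = 0 := by
  induction k, hnk using Nat.le_induction with
  | base => exact h
  | succ k _ ih => rw [gRemU_succ hq, ih, greedyU_eq_zero_of_gRemU_eq_zero hq ih]; simp

theorem gRemU_pos_of_greedyU_ne_zero (hq : 0 < q) (hx : 0 ≤ x) {i m : ℕ}
    (hm : greedyU q x m ≠ 0) (him : i ≤ m) : 0 < gRemU q x i := by
  refine (gRemU_nonneg hq hx i).lt_of_ne fun h => hm ?_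
  exact greedyU_eq_zero_of_gRemU_eq_zero hq (gRemU_eq_zero_of_le hq h.symm him)

theorem gRemU_succ_eq_zero (hq : 1 < q) (hx : 0 ≤ x) {m : ℕ}
    (h : ∀ i, m < i → greedyU q x i = 0) : gRemU q x (m + 1) = 0 := by
  have hq0 : 0 < q := by linarith
  have hgrow : ∀ k, gRemU q x (m + 1 + k) = q ^ k * gRemU q x (m + 1) := by
    intro k
    induction k with
    | zero => simp
    | succ k ih =>
      rw [← add_assoc, gRemU_succ hq0, ih, h _ (by omega)]
      push_cast
      ring
  refine eq_zero_of_forall_abs_pow_mul_le hq (C := 1) fun k => ?_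
  rw [← hgrow, abs_of_nonneg (gRemU_nonneg hq0 hx _), add_right_comm]
  exact (gRemU_succ_lt_one hq0 hx _).le

theorem quasiGreedyU_eq_greedyU (hq : 0 < q) {n : ℕ} (hXY : qgRemU q x n = gRemU q x n)
    (hY : 0 < gRemU q x n) (hY1 : 0 < gRemU q x (n + 1)) : quasiGreedyU q x n = greedyU q x n := by
  have hα := quasiGreedyU_lt hq (hXY ▸ hY)
  have hα' := le_quasiGreedyU_add_one hq (hXY ▸ hY)
  have hβ := lt_greedyU_add_one hq hY.le
  rw [gRemU_succ hq] at hY1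
  rw [hXY] at hα hα'
  have h1 : (quasiGreedyU q x n : ℝ) < greedyU q x n + 1 := by linarith
  have h2 : (greedyU q x n : ℝ) < quasiGreedyU q x n + 1 := by linarith
  have h1' : quasiGreedyU q x n < greedyU q x n + 1 := by exact_mod_cast h1
  have h2' : greedyU q x n < quasiGreedyU q x n + 1 := by exact_mod_cast h2
  omega

theorem qgRemU_eq_gRemU (hq : 0 < q) {n : ℕ} (h : ∀ i ≤ n, 0 < gRemU q x i) :
    qgRemU q x n = gRemU q x n := by
  induction n with
  | zero => simp
  | succ n ih =>
    have hXY := ih fun i hi => h i (by omega)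
    rw [qgRemU_succ hq, gRemU_succ hq, hXY,
      quasiGreedyU_eq_greedyU hq hXY (h n (by omega)) (h (n + 1) le_rfl)]

theorem quasiGreedyU_eq_greedyU_of_forall_pos (hq : 0 < q) {n : ℕ}
    (h : ∀ i ≤ n + 1, 0 < gRemU q x i) : quasiGreedyU q x n = greedyU q x n :=
  quasiGreedyU_eq_greedyU hq (qgRemU_eq_gRemU hq fun i hi => h i (by omega)) (h n (by omega))
    (h (n + 1) le_rfl)

theorem quasiGreedyU_add_one_eq_greedyU (hq : 0 < q) {m : ℕ}
    (hXY : qgRemU q x m = gRemU q x m) (hY : 0 < gRemU q x m) (hY1 : gRemU q x (m + 1) = 0) :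
    quasiGreedyU q x m + 1 = greedyU q x m := by
  have hα := quasiGreedyU_lt hq (hXY ▸ hY)
  have hα' := le_quasiGreedyU_add_one hq (hXY ▸ hY)
  rw [gRemU_succ hq] at hY1
  rw [hXY] at hα hα'
  have h1 : (quasiGreedyU q x m : ℝ) < greedyU q x m := by linarith
  have h2 : (greedyU q x m : ℝ) ≤ quasiGreedyU q x m + 1 := by linarith
  have h1' : quasiGreedyU q x m < greedyU q x m := by exact_mod_cast h1
  have h2' : greedyU q x m ≤ quasiGreedyU q x m + 1 := by exact_mod_cast h2
  omega

theorem qgRemU_succ_eq_one (hq : 0 < q) {m : ℕ}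
    (hXY : qgRemU q x m = gRemU q x m) (hY : 0 < gRemU q x m) (hY1 : gRemU q x (m + 1) = 0) :
    qgRemU q x (m + 1) = 1 := by
  have hβ : (quasiGreedyU q x m : ℝ) + 1 = greedyU q x m := by
    exact_mod_cast quasiGreedyU_add_one_eq_greedyU hq hXY hY hY1
  rw [gRemU_succ hq] at hY1
  rw [qgRemU_succ hq, hXY]
  linarith

theorem periodic_quasiGreedyU_of_qgRemU_eq (hq : 0 < q) (hx : 0 < x) {p : ℕ}
    (hp : qgRemU q x p = x) : Function.Periodic (quasiGreedyU q x) p := by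
  have hX : ∀ n, qgRemU q x (n + p) = qgRemU q x n := by
    intro n
    induction n with
    | zero => simpa
    | succ n ih =>
      rw [add_right_comm, qgRemU_succ hq, qgRemU_succ hq, ih,
        quasiGreedyU_eq_ceil_sub_one hq (qgRemU_pos hq hx _), ih,
        ← quasiGreedyU_eq_ceil_sub_one hq (qgRemU_pos hq hx _)]
  intro n
  rw [quasiGreedyU_eq_ceil_sub_one hq (qgRemU_pos hq hx _), hX,
    ← quasiGreedyU_eq_ceil_sub_one hq (qgRemU_pos hq hx _)]

theorem qgRemU_eq_of_periodic (hq : 1 < q) (hx : 0 < x) (hx1 : x ≤ 1) {p : ℕ}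
    (hp : Function.Periodic (quasiGreedyU q x) p) : qgRemU q x p = x := by
  have hq0 : 0 < q := by linarith
  have hdiff : ∀ n, qgRemU q x (n + p) - qgRemU q x n = q ^ n * (qgRemU q x p - x) := by
    intro n
    induction n with
    | zero => simp
    | succ n ih =>
      rw [add_right_comm, qgRemU_succ hq0, qgRemU_succ hq0, hp n, pow_succ]
      linear_combination q * ih
  refine sub_eq_zero.mp (eq_zero_of_forall_abs_pow_mul_le hq (C := 1) fun n => ?_)
  have h1 := qgRemU_pos hq0 hx (n + p)
  have h2 := qgRemU_le_one hq0 hx hx1 (n + p)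
  have h3 := qgRemU_pos hq0 hx n
  have h4 := qgRemU_le_one hq0 hx hx1 n
  rw [← hdiff, abs_le]
  constructor <;> linarith

theorem not_periodic_quasiGreedyU_one (hq : 1 < q) {p : ℕ}
    (hXY : qgRemU q 1 (p + 1) = gRemU q 1 (p + 1)) :
    ¬ Function.Periodic (quasiGreedyU q 1) (p + 1) := fun hper => by
  have hX := qgRemU_eq_of_periodic hq one_pos le_rfl hper
  rw [hXY] at hX
  exact (gRemU_succ_lt_one (by linarith) zero_le_one p).ne hX

end

/-- Proposition 3.7 (b): with unbounded digits, if the greedy expansion `(β_i)` of `1` has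
a last nonzero element `β_m`, then the quasi-greedy expansion `(α_i)` of `1` is periodic
with smallest period `β_1 … β_{m-1} (β_m - 1)`; otherwise `(β_i) = (α_i)` and this
sequence is not periodic. -/
theorem quasiGreedyU_one_eq_of_greedyU_one (q : ℝ) (hq : 1 < q) :
    (∀ m : ℕ, 1 ≤ greedyU q 1 m → (∀ i, m < i → greedyU q 1 i = 0) →
      ((∀ i, quasiGreedyU q 1 i =
          if i % (m + 1) = m then greedyU q 1 m - 1 else greedyU q 1 (i % (m + 1))) ∧
        ∀ p, 0 < p → (∀ i, quasiGreedyU q 1 (i + p) = quasiGreedyU q 1 i) →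
          m + 1 ≤ p)) ∧
    ({n | greedyU q 1 n ≠ 0}.Infinite →
      greedyU q 1 = quasiGreedyU q 1 ∧
      ¬ ∃ p, 0 < p ∧ ∀ i, quasiGreedyU q 1 (i + p) = quasiGreedyU q 1 i) := by
  have hq0 : 0 < q := by linarith
  refine ⟨fun m hm hz => ?_, fun hinf => ?_⟩
  · have hpos : ∀ i ≤ m, 0 < gRemU q 1 i := fun i hi =>
      gRemU_pos_of_greedyU_ne_zero hq0 zero_le_one (by omega) hi
    have hXY : ∀ i ≤ m, qgRemU q 1 i = gRemU q 1 i := fun i hi =>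
      qgRemU_eq_gRemU hq0 fun j hj => hpos j (hj.trans hi)
    have hY : gRemU q 1 (m + 1) = 0 := gRemU_succ_eq_zero hq zero_le_one hz
    have hlast := quasiGreedyU_add_one_eq_greedyU hq0 (hXY m le_rfl) (hpos m le_rfl) hY
    have hper : Function.Periodic (quasiGreedyU q 1) (m + 1) :=
      periodic_quasiGreedyU_of_qgRemU_eq hq0 one_pos
        (qgRemU_succ_eq_one hq0 (hXY m le_rfl) (hpos m le_rfl) hY)
    refine ⟨fun i => ?_, fun p hp hperp => ?_⟩
    · have hi : i % (m + 1) < m + 1 := Nat.mod_lt i m.succ_pos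
      rw [← hper.map_mod_nat i]
      split_ifs with him
      · rw [him]
        omega
      · exact quasiGreedyU_eq_greedyU_of_forall_pos hq0 fun j hj => hpos j (by omega)
    · obtain ⟨p, rfl⟩ := Nat.exists_eq_add_one.mpr hp
      by_contra! hpm
      exact not_periodic_quasiGreedyU_one hq (hXY _ (by omega)) hperp
  · have hpos : ∀ n, 0 < gRemU q 1 n := fun n =>
      let ⟨_, hi, hni⟩ := hinf.exists_gt n
      gRemU_pos_of_greedyU_ne_zero hq0 zero_le_one hi hni.le
    refine ⟨funext fun n => (quasiGreedyU_eq_greedyU_of_forall_pos hq0 fun i _ => hpos i).symm, ?_⟩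
    rintro ⟨p, hp, hperp⟩
    obtain ⟨p, rfl⟩ := Nat.exists_eq_add_one.mpr hp
    exact not_periodic_quasiGreedyU_one hq (qgRemU_eq_gRemU hq0 fun i _ => hpos i) hperp
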